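/- Let G be a connected finite simple graph on [d] and suppose the edge e = {i,j} of G (with a chosen orientation from i to j) is not a bridge. Let P_e be the convex hull of A(G) ∖ {e_i − e_j}, where A(G) = {±(e_k − e_l) : {k,l} ∈ E(G)}. Then h*(P_e, x) = (1/2) · ( h*(A_G, x) + h*(A_{G∖e}, x) ), where G∖e is the graph obtained by deleting the edge e from G. -/

import Mathlib

open scoped Pointwise
open Polynomial

namespace ABP

variable {V : Type*}

/-- A point of `ℝ^V` all of whose coordinates are integers. -/
def IsLatticePoint (x : V → ℝ) : Prop := ∀ i, ∃ z : ℤ, x i = (z : ℝ)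

/-- A lattice polytope: the convex hull of finitely many lattice points. -/
def IsLatticePolytope [Fintype V] (P : Set (V → ℝ)) : Prop :=
  ∃ S : Finset (V → ℝ), (∀ v ∈ S, IsLatticePoint v) ∧ P = convexHull ℝ (S : Set (V → ℝ))

/-- The dimension of a polytope, as the rank of its vector span. -/
noncomputable def polyDim [Fintype V] (P : Set (V → ℝ)) : ℕ :=
  Module.finrank ℝ (vectorSpan ℝ P)

/-- The number of lattice points of the `m`-th dilate of `P`. -/
noncomputable def latticeCount [Fintype V] (P : Set (V → ℝ)) (m : ℕ) : ℕ :=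
  Set.ncard {x : V → ℤ | (fun i => (x i : ℝ)) ∈ (m : ℝ) • P}

/-- `h` is the `h^*`-polynomial of the lattice polytope `P`:
`(1 + ∑_{m≥1} L_P(m) x^m) · (1-x)^{dim P + 1} = h` as formal power series. -/
def IsHStar [Fintype V] (P : Set (V → ℝ)) (h : Polynomial ℝ) : Prop :=
  (PowerSeries.mk fun m => if m = 0 then (1 : ℝ) else (latticeCount P m : ℝ)) *
      (1 - PowerSeries.X) ^ (polyDim P + 1) = (h : PowerSeries ℝ)

/-- `f` is γ-positive: `f = ∑ γ_i x^i (1+x)^{deg f - 2i}` with all `γ_i ≥ 0`. -/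
def GammaPositive (f : Polynomial ℝ) : Prop :=
  ∃ γ : ℕ → ℝ, (∀ i, 0 ≤ γ i) ∧
    f = ∑ i ∈ Finset.range (f.natDegree / 2 + 1),
      Polynomial.C (γ i) * Polynomial.X ^ i * (1 + Polynomial.X) ^ (f.natDegree - 2 * i)

/-- A real polynomial is real-rooted if all of its complex roots are real. -/
def RealRooted (f : Polynomial ℝ) : Prop :=
  ∀ z : ℂ, (f.map (algebraMap ℝ ℂ)).IsRoot z → z.im = 0

/-- The `±1`-vector associated to `ε : V → Bool`. -/
def signVec (ε : V → Bool) : V → ℝ := fun i => if ε i then 1 else -1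

/-- The unconditional set `P^± = {εx : ε ∈ {-1,1}^V, x ∈ P}`. -/
def uncond (P : Set (V → ℝ)) : Set (V → ℝ) :=
  {y | ∃ (ε : V → Bool) (x : V → ℝ), x ∈ P ∧ y = signVec ε * x}

/-- The closed orthant `ℝ^V_ε`. -/
def orthant (ε : V → Bool) : Set (V → ℝ) := {x | ∀ i, 0 ≤ signVec ε i * x i}

/-- Anti-blocking set: contained in the nonnegative orthant and downward closed there. -/
def IsAntiBlocking (P : Set (V → ℝ)) : Prop :=
  (∀ x ∈ P, ∀ i, 0 ≤ x i) ∧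
    ∀ y ∈ P, ∀ x : V → ℝ, (∀ i, 0 ≤ x i ∧ x i ≤ y i) → x ∈ P

/-- Locally anti-blocking (full-dimensional) lattice polytope. -/
def LocallyAntiBlocking [Fintype V] (P : Set (V → ℝ)) : Prop :=
  ∀ ε : V → Bool, ∃ Q : Set (V → ℝ), IsLatticePolytope Q ∧ IsAntiBlocking Q ∧
    polyDim Q = Fintype.card V ∧ P ∩ orthant ε = uncond Q ∩ orthant ε

/-- The dual (polar) body of `P`. -/
def dualPoly [Fintype V] (P : Set (V → ℝ)) : Set (V → ℝ) :=
  {y | ∀ x ∈ P, ∑ i, x i * y i ≤ 1}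

/-- `P` is a reflexive polytope. -/
def IsReflexive [Fintype V] (P : Set (V → ℝ)) : Prop :=
  IsLatticePolytope P ∧ (0 : V → ℝ) ∈ interior P ∧ IsLatticePolytope (dualPoly P)

/-- The `i`-th unit coordinate vector. -/
def unitVec [DecidableEq V] (i : V) : V → ℝ := fun j => if j = i then 1 else 0

/-- Symmetric edge polytope of type A: `conv{±(e_i - e_j) : {i,j} ∈ E(G)}`. -/
def symEdgeA [DecidableEq V] (G : SimpleGraph V) : Set (V → ℝ) :=
  convexHull ℝ {v | ∃ i j, G.Adj i j ∧ v = unitVec i - unitVec j}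

/-- The polytope `B_G = conv({0, e_1, …, e_d} ∪ {e_i + e_j : {i,j} ∈ E(G)})`. -/
def typeBBase [DecidableEq V] (G : SimpleGraph V) : Set (V → ℝ) :=
  convexHull ℝ ({0} ∪ {v | ∃ i, v = unitVec i} ∪
    {v | ∃ i j, G.Adj i j ∧ v = unitVec i + unitVec j})

/-- Symmetric edge polytope of type B: `𝓑_G = (B_G)^±`. -/
def symEdgeB [DecidableEq V] (G : SimpleGraph V) : Set (V → ℝ) := uncond (typeBBase G)

/-- The suspension of a graph on `Fin d`: a new vertex joined to all old vertices. -/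
def suspension {d : ℕ} (G : SimpleGraph (Fin d)) : SimpleGraph (Fin (d + 1)) :=
  SimpleGraph.fromRel (fun a b =>
    (∃ p q : Fin d, G.Adj p q ∧ a = p.castSucc ∧ b = q.castSucc) ∨
      (a ≠ Fin.last d ∧ b = Fin.last d))

/-- The cut `E_S` of `G`, as a spanning subgraph of `G`. -/
def cutGraph [DecidableEq V] (G : SimpleGraph V) (S : Finset V) : SimpleGraph V :=
  SimpleGraph.fromRel (fun a b => G.Adj a b ∧ ((a ∈ S) ↔ (b ∉ S)))

/-- Contraction of the edge `{i,j}`: merge `j` into `i` (the vertex `j` becomes isolated,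
so that the resulting polytopes are the same as for the contracted graph on `d-1` vertices). -/
def contractEdge {d : ℕ} (G : SimpleGraph (Fin d)) (i j : Fin d) : SimpleGraph (Fin d) :=
  SimpleGraph.fromRel (fun a b => a ≠ j ∧ b ≠ j ∧
    (G.Adj a b ∨ (a = i ∧ G.Adj j b) ∨ (b = i ∧ G.Adj a j)))

/-- The graph `G̃` attached to a bipartite graph `G` with bipartition `V₁ ∪ V₁ᶜ`. -/
def tildeGraph {d : ℕ} (G : SimpleGraph (Fin d)) (V1 : Finset (Fin d)) :
    SimpleGraph (Fin (d + 2)) :=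
  SimpleGraph.fromRel (fun a b =>
    (∃ p q : Fin d, G.Adj p q ∧ a = p.castSucc.castSucc ∧ b = q.castSucc.castSucc) ∨
    (∃ p ∈ V1, a = (p.castSucc.castSucc : Fin (d + 2)) ∧ b = (⟨d, by omega⟩ : Fin (d + 2))) ∨
    (∃ p : Fin d, p ∉ V1 ∧ a = p.castSucc.castSucc ∧ b = (⟨d + 1, by omega⟩ : Fin (d + 2))) ∨
    (a = (⟨d, by omega⟩ : Fin (d + 2)) ∧ b = (⟨d + 1, by omega⟩ : Fin (d + 2))))

/-- Unimodular (lattice) equivalence of polytopes. -/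
def UnimodEquiv {n m : ℕ} (P : Set (Fin n → ℝ)) (Q : Set (Fin m → ℝ)) : Prop :=
  ∃ (f : (Fin n → ℝ) →ᵃ[ℝ] (Fin m → ℝ)) (g : (Fin m → ℝ) →ᵃ[ℝ] (Fin n → ℝ)),
    f '' P = Q ∧ g '' Q = P ∧ (∀ x ∈ P, g (f x) = x) ∧ (∀ y ∈ Q, f (g y) = y) ∧
    (∀ x, IsLatticePoint x → IsLatticePoint (f x)) ∧
    (∀ y, IsLatticePoint y → IsLatticePoint (g y))

/-- A subgraph is 2-connected: connected, and still connected after deleting any vertex. -/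
def TwoConnSub {G : SimpleGraph V} (B : G.Subgraph) : Prop :=
  B.Connected ∧ ∀ v ∈ B.verts, (B.deleteVerts {v}).Connected

/-- A block (2-connected component) of `G`: a maximal 2-connected subgraph. -/
def IsBlock (G : SimpleGraph V) (B : G.Subgraph) : Prop :=
  TwoConnSub B ∧ ∀ B' : G.Subgraph, B ≤ B' → TwoConnSub B' → B' = B

/-- The coordinate projection `π_J` of a subset of `ℝ^d` onto `ℝ^{|J|}`. -/
def projSet {d : ℕ} (J : Finset (Fin d)) (P : Set (Fin d → ℝ)) : Set (Fin J.card → ℝ) :=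
  (fun (x : Fin d → ℝ) (k : Fin J.card) => x (J.orderEmbOfFin rfl k)) '' P

section Posets

variable {d : ℕ}

/-- `A` is an antichain of the poset `P` on `Fin d`. -/
def IsPosetAntichain (P : PartialOrder (Fin d)) (A : Finset (Fin d)) : Prop :=
  ∀ i ∈ A, ∀ j ∈ A, i ≠ j → ¬ P.lt i j ∧ ¬ P.lt j i

/-- The chain polytope of a poset on `Fin d`. -/
def chainPoly (P : PartialOrder (Fin d)) : Set (Fin d → ℝ) :=
  convexHull ℝ {x | ∃ A : Finset (Fin d), IsPosetAntichain P A ∧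
    x = fun i => if i ∈ A then (1 : ℝ) else 0}

/-- The enriched chain polytope `C_P^(e) = (C_P)^±`. -/
def enrichedChainPoly (P : PartialOrder (Fin d)) : Set (Fin d → ℝ) := uncond (chainPoly P)

/-- The twinned chain polytope `C_{P,Q} = conv(C_P ∪ -C_Q)`. -/
def twinnedChainPoly (P Q : PartialOrder (Fin d)) : Set (Fin d → ℝ) :=
  convexHull ℝ (chainPoly P ∪ -(chainPoly Q))

/-- The order polytope of a poset on `Fin d`. -/
def orderPoly (P : PartialOrder (Fin d)) : Set (Fin d → ℝ) :=
  {x | (∀ i, 0 ≤ x i ∧ x i ≤ 1) ∧ ∀ i j, P.lt i j → x i ≤ x j}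

/-- A poset on `Fin d` is naturally labeled. -/
def NaturallyLabeled (P : PartialOrder (Fin d)) : Prop := ∀ i j, P.lt i j → i < j

/-- `π` (as a listing `π 0, π 1, …`) is a linear extension of `P`. -/
def IsLinearExtension (P : PartialOrder (Fin d)) (π : Fin d → Fin d) : Prop :=
  Function.Bijective π ∧ ∀ a b, P.lt (π a) (π b) → a < b

/-- The sequence of (1-based) labels of the listing `π`, with sentinel `π_0 = 0`. -/
def seqOf (π : Fin d → Fin d) (k : ℕ) : ℕ :=
  if h : 1 ≤ k ∧ k ≤ d then (π ⟨k - 1, by omega⟩).val + 1 else 0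

/-- The number of left peaks of the listing `π`. -/
def leftPeakCount (π : Fin d → Fin d) : ℕ :=
  ((Finset.Icc 1 (d - 1)).filter
    (fun i => seqOf π (i - 1) < seqOf π i ∧ seqOf π (i + 1) < seqOf π i)).card

open scoped Classical in
/-- The left peak polynomial `W_P^(ℓ)(x) = ∑_{π ∈ L(P)} x^{pk^(ℓ)(π)}`. -/
noncomputable def leftPeakPoly (P : PartialOrder (Fin d)) : Polynomial ℝ :=
  ∑ π : Equiv.Perm (Fin d),
    if IsLinearExtension P (π : Fin d → Fin d) then
      Polynomial.X ^ leftPeakCount (π : Fin d → Fin d) else 0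

/-- The strict order of the ordinal sum `P_I ⊕ Q_{Iᶜ}` of induced subposets. -/
def ordinalSumLt (P Q : PartialOrder (Fin d)) (I : Set (Fin d)) (i j : Fin d) : Prop :=
  (i ∈ I ∧ j ∈ I ∧ P.lt i j) ∨ (i ∉ I ∧ j ∉ I ∧ Q.lt i j) ∨ (i ∈ I ∧ j ∉ I)

/-- The polynomial `(x+1)^d f(4x/(x+1)^2)` (for `deg f ≤ d/2`). -/
noncomputable def gammaSub (d : ℕ) (f : Polynomial ℝ) : Polynomial ℝ :=
  ∑ k ∈ Finset.range (d + 1),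
    Polynomial.C (f.coeff k * 4 ^ k) * Polynomial.X ^ k * (1 + Polynomial.X) ^ (d - 2 * k)

/-- The Cayley sum `X * Y ⊂ ℝ^{d+1}`. -/
def cayleySum (X Y : Set (Fin d → ℝ)) : Set (Fin (d + 1) → ℝ) :=
  convexHull ℝ ({z | ∃ x ∈ X, z = Fin.snoc x 0} ∪ {z | ∃ y ∈ Y, z = Fin.snoc y 1})

/-- `Ω(X, Y) = conv((X × {1}) ∪ (−Y × {−1})) ⊂ ℝ^{d+1}`. -/
def omegaSum (X Y : Set (Fin d → ℝ)) : Set (Fin (d + 1) → ℝ) :=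
  convexHull ℝ ({z | ∃ x ∈ X, z = Fin.snoc x 1} ∪ {z | ∃ y ∈ Y, z = -(Fin.snoc y 1)})

/-- `Γ(X, Y) = conv(X ∪ (−Y))`. -/
def gammaSum (X Y : Set (Fin d → ℝ)) : Set (Fin d → ℝ) :=
  convexHull ℝ (X ∪ -Y)

/-- Enriched `(P,Q)`-partition. -/
def IsEnrichedPQPartition (P Q : PartialOrder (Fin d)) (f : Fin d → ℤ) : Prop :=
  (∀ x y, P.lt x y → 0 ≤ f x → 0 ≤ f y → f x ≤ f y) ∧
  (∀ x y, Q.lt x y → f x ≤ 0 → f y ≤ 0 → f y ≤ f x)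

/-- `M(f) = max({0} ∪ f([d]))`. -/
def maxVal (f : Fin d → ℤ) : ℤ :=
  (insert 0 (Finset.image f Finset.univ)).max' (Finset.insert_nonempty _ _)

/-- `m(f) = min({0} ∪ f([d]))`. -/
def minVal (f : Fin d → ℤ) : ℤ :=
  (insert 0 (Finset.image f Finset.univ)).min' (Finset.insert_nonempty _ _)

/-- The number of enriched `(P,Q)`-partitions `f` with `M(f) - m(f) ≤ m`. -/
noncomputable def OmegaPQ (P Q : PartialOrder (Fin d)) (m : ℕ) : ℕ :=
  Set.ncard {f : Fin d → ℤ | IsEnrichedPQPartition P Q f ∧ maxVal f - minVal f ≤ (m : ℤ)}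

end Posets

section Faces

variable [Fintype V]

/-- `F` is a face of `P` (cut out by a supporting linear functional). -/
def IsFace (P F : Set (V → ℝ)) : Prop :=
  ∃ (c : V → ℝ) (b : ℝ), (∀ x ∈ P, ∑ i, c i * x i ≤ b) ∧ F = {x ∈ P | ∑ i, c i * x i = b}

/-- `F` is a facet of `P`: a face of dimension `dim P - 1`. -/
def IsFacet (P F : Set (V → ℝ)) : Prop :=
  IsFace P F ∧ polyDim F + 1 = polyDim P

/-- `F` is a simplex: the convex hull of affinely independent points. -/
def IsSimplexSet (F : Set (V → ℝ)) : Prop :=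
  ∃ S : Finset (V → ℝ), AffineIndependent ℝ (fun v : S => (v : V → ℝ)) ∧
    F = convexHull ℝ (S : Set (V → ℝ))

end Faces

end ABP

open ABP

/-! With `W = A(G ∖ e)` and `L = conv(W ∪ {-e}) = P_e`, the polytope `A_G = conv(W ∪ {±e})` is
`L ∪ -L`, and `L ∩ -L = conv W = A_{G∖e}`; both facts only use `0 ∈ conv W`. Since `e` is not a
bridge, `e` is a sum of edge vectors of `G ∖ e`, so the three polytopes have the same dimension.
Inclusion–exclusion and the symmetry `x ↦ -x` then give
`L_{A_G}(m) + L_{A_{G∖e}}(m) = 2 L_{P_e}(m)` for every `m ≥ 1`, hence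
`h*(A_G) + h*(A_{G∖e}) = 2 h*(P_e)`.
-/

section ConvexGeometry

variable {E : Type*} [AddCommGroup E] [Module ℝ E]

theorem Convex.smul_add_smul_mem_of_zero_mem {C : Set E} (hC : Convex ℝ C) (h0 : (0 : E) ∈ C)
    {p q : E} (hp : p ∈ C) (hq : q ∈ C) {a b : ℝ} (ha : 0 ≤ a) (hb : 0 ≤ b) (hab : a + b ≤ 1) :
    a • p + b • q ∈ C := by
  rcases (add_nonneg ha hb).eq_or_lt with hs | hs
  · obtain ⟨rfl, rfl⟩ : a = 0 ∧ b = 0 := ⟨by linarith, by linarith⟩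
    simpa using h0
  · have hmid := hC hp hq (div_nonneg ha hs.le) (div_nonneg hb hs.le) (by field_simp)
    convert hC.smul_mem_of_zero_mem h0 hmid ⟨hs.le, hab⟩ using 1
    simp only [smul_add, smul_smul, mul_div_cancel₀ _ hs.ne']

theorem zero_mem_convexHull_of_neg_eq {s : Set E} (hs : -s = s) (hne : s.Nonempty) :
    (0 : E) ∈ convexHull ℝ s := by
  obtain ⟨v, hv⟩ := hne
  have hnv : -v ∈ s := hs ▸ Set.neg_mem_neg.mpr hv
  convert convex_convexHull ℝ s (subset_convexHull ℝ s hv) (subset_convexHull ℝ s hnv)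
    (by norm_num : (0 : ℝ) ≤ 1 / 2) (by norm_num : (0 : ℝ) ≤ 1 / 2) (by norm_num) using 1
  module

theorem mem_vectorSpan_of_neg_mem {s : Set E} {v : E} (hv : v ∈ s) (hnv : -v ∈ s) :
    v ∈ vectorSpan ℝ s := by
  convert Submodule.smul_mem _ (2⁻¹ : ℝ) (vsub_mem_vectorSpan ℝ hv hnv) using 1
  rw [vsub_eq_sub]
  module

theorem mem_affineSpan_of_mem_vectorSpan {s : Set E} (h0 : (0 : E) ∈ affineSpan ℝ s) {v : E}
    (hv : v ∈ vectorSpan ℝ s) : v ∈ affineSpan ℝ s := by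
  simpa using AffineSubspace.vadd_mem_of_mem_direction (by rwa [direction_affineSpan]) h0

theorem convexHull_insert_insert_neg {s : Set E} (h0 : (0 : E) ∈ convexHull ℝ s) (e : E) :
    convexHull ℝ (insert e (insert (-e) s)) =
      convexHull ℝ (insert (-e) s) ∪ convexHull ℝ (insert e s) := by
  refine subset_antisymm ?_ (Set.union_subset (convexHull_mono (Set.subset_insert _ _))
    (convexHull_mono (Set.insert_subset_insert (Set.subset_insert _ _))))
  intro x hx
  rw [convexHull_insert (Set.insert_nonempty _ _), mem_convexJoin] at hx
  obtain ⟨_, rfl, z, hz, a, b, ha, hb, hab, rfl⟩ := hx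
  rw [convexHull_insert (convexHull_nonempty_iff.mp ⟨0, h0⟩), mem_convexJoin] at hz
  obtain ⟨_, rfl, w, hw, c, f, hc, hf, hcf, rfl⟩ := hz
  -- in `a • e + b • (c • -e + f • w)` the `±e` parts cancel down to `(a - b * c) • e`,
  -- and the weight that is lost goes to `0 ∈ conv s`
  rcases le_total a (b * c) with hle | hle
  · left
    convert (convex_convexHull ℝ _).smul_add_smul_mem_of_zero_mem
      (convexHull_mono (Set.subset_insert _ _) h0) (subset_convexHull ℝ _ (Set.mem_insert _ _))
      (convexHull_mono (Set.subset_insert _ _) hw) (sub_nonneg.2 hle) (mul_nonneg hb hf)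
      (by nlinarith) using 1
    module
  · right
    convert (convex_convexHull ℝ _).smul_add_smul_mem_of_zero_mem
      (convexHull_mono (Set.subset_insert _ _) h0) (subset_convexHull ℝ _ (Set.mem_insert _ _))
      (convexHull_mono (Set.subset_insert _ _) hw) (sub_nonneg.2 hle) (mul_nonneg hb hf)
      (by nlinarith) using 1
    module

theorem convexHull_insert_neg_inter_convexHull_insert {s : Set E}
    (h0 : (0 : E) ∈ convexHull ℝ s) (e : E) :
    convexHull ℝ (insert (-e) s) ∩ convexHull ℝ (insert e s) = convexHull ℝ s := by
  refine subset_antisymm ?_ (Set.subset_inter (convexHull_mono (Set.subset_insert _ _))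
    (convexHull_mono (Set.subset_insert _ _)))
  rintro x ⟨hx₁, hx₂⟩
  have hne : s.Nonempty := convexHull_nonempty_iff.mp ⟨0, h0⟩
  rw [convexHull_insert hne, mem_convexJoin] at hx₁ hx₂
  obtain ⟨_, rfl, u, hu, a, a', ha, ha', haa', hxu⟩ := hx₁
  obtain ⟨_, he, v, hv, b, b', hb, hb', hbb', hxv⟩ := hx₂
  rw [Set.mem_singleton_iff.mp he] at hxv
  rcases ha.eq_or_lt with rfl | hapos
  · rw [← hxu]
    simpa [show a' = 1 by linarith] using hu
  have hs : 0 < a + b := by linarith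
  -- eliminate `e` between the two representations of `x`
  have hcomb : (a + b) • x = (b * a') • u + (a * b') • v := by
    calc (a + b) • x = b • x + a • x := add_smul a b x ▸ add_comm _ _
      _ = b • (a • -e + a' • u) + a • (b • e + b' • v) := by rw [hxu, hxv]
      _ = (b * a') • u + (a * b') • v := by module
  have hx : x = (b * a' / (a + b)) • u + (a * b' / (a + b)) • v := by
    rw [← inv_smul_smul₀ hs.ne' x, hcomb]
    module
  rw [hx]
  refine (convex_convexHull ℝ s).smul_add_smul_mem_of_zero_mem h0 hu hv (by positivity)
    (by positivity) ?_
  rw [← add_div, div_le_one hs]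
  nlinarith

end ConvexGeometry

namespace ABP

section LatticePoints

variable {V : Type*}

def latticePoints (P : Set (V → ℝ)) (m : ℕ) : Set (V → ℤ) :=
  {x | (fun i => (x i : ℝ)) ∈ (m : ℝ) • P}

theorem latticePoints_union (P Q : Set (V → ℝ)) (m : ℕ) :
    latticePoints (P ∪ Q) m = latticePoints P m ∪ latticePoints Q m := by
  ext x
  simp [latticePoints, Set.smul_set_union]

theorem latticePoints_inter (P Q : Set (V → ℝ)) {m : ℕ} (hm : m ≠ 0) :
    latticePoints (P ∩ Q) m = latticePoints P m ∩ latticePoints Q m := by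
  ext x
  simp [latticePoints, Set.smul_set_inter₀ (Nat.cast_ne_zero.2 hm : (m : ℝ) ≠ 0)]

theorem latticePoints_neg (P : Set (V → ℝ)) (m : ℕ) :
    latticePoints (-P) m = -latticePoints P m := by
  ext x
  change _ ∈ (m : ℝ) • -P ↔ (fun i => ((-x) i : ℝ)) ∈ (m : ℝ) • P
  rw [Set.smul_set_neg, Set.mem_neg]
  simp only [Pi.neg_apply, Int.cast_neg]
  rfl

end LatticePoints

section Ehrhart

variable {V : Type*} [Fintype V]

theorem latticeCount_eq_ncard (P : Set (V → ℝ)) (m : ℕ) :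
    latticeCount P m = (latticePoints P m).ncard := rfl

theorem finite_latticePoints {P : Set (V → ℝ)} (hP : Bornology.IsBounded P) (m : ℕ) :
    (latticePoints P m).Finite :=
  have hB : Bornology.IsBounded (latticePoints P m) :=
    Real.isometry_intCast.postcomp_pi.antilipschitz.isBounded_preimage (hP.smul₀ (m : ℝ))
  hB.isCompact_closure.finite_of_discrete.subset subset_closure

theorem latticeCount_neg (P : Set (V → ℝ)) (m : ℕ) : latticeCount (-P) m = latticeCount P m := by
  rw [latticeCount_eq_ncard, latticePoints_neg, Set.ncard_neg, latticeCount_eq_ncard]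

theorem latticeCount_union_add_latticeCount_inter {P Q : Set (V → ℝ)}
    (hP : Bornology.IsBounded P) (hQ : Bornology.IsBounded Q) {m : ℕ} (hm : m ≠ 0) :
    latticeCount (P ∪ Q) m + latticeCount (P ∩ Q) m = latticeCount P m + latticeCount Q m := by
  simp only [latticeCount_eq_ncard, latticePoints_union, latticePoints_inter P Q hm]
  exact Set.ncard_union_add_ncard_inter _ _ (finite_latticePoints hP m) (finite_latticePoints hQ m)

theorem polyDim_convexHull (s : Set (V → ℝ)) : polyDim (convexHull ℝ s) = polyDim s := by
  rw [polyDim, polyDim, ← direction_affineSpan, affineSpan_convexHull, direction_affineSpan]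

noncomputable def ehrhartSeries (P : Set (V → ℝ)) : PowerSeries ℝ :=
  PowerSeries.mk fun m => if m = 0 then 1 else (latticeCount P m : ℝ)

theorem isHStar_iff {P : Set (V → ℝ)} {h : ℝ[X]} :
    IsHStar P h ↔ ehrhartSeries P * (1 - PowerSeries.X) ^ (polyDim P + 1) = (h : PowerSeries ℝ) :=
  Iff.rfl

theorem IsHStar.add_eq_two_mul {P Q R : Set (V → ℝ)} {p q r : ℝ[X]} (hp : IsHStar P p)
    (hq : IsHStar Q q) (hr : IsHStar R r) (hPR : polyDim P = polyDim R)
    (hQR : polyDim Q = polyDim R)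
    (hcount : ∀ m ≠ 0, latticeCount P m + latticeCount Q m = 2 * latticeCount R m) :
    p + q = C 2 * r := by
  have hseries : ehrhartSeries P + ehrhartSeries Q = PowerSeries.C 2 * ehrhartSeries R := by
    ext m
    rcases eq_or_ne m 0 with rfl | hm
    · simp [ehrhartSeries]
      norm_num
    · simp only [ehrhartSeries, map_add, PowerSeries.coeff_C_mul, PowerSeries.coeff_mk, if_neg hm]
      exact_mod_cast hcount m hm
  rw [isHStar_iff] at hp hq hr
  apply Polynomial.coe_inj.mp
  rw [coe_add, coe_mul, coe_C, ← hp, ← hq, ← hr, hPR, hQR, ← add_mul, hseries, mul_assoc]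

theorem hstar_convexHull_insert_neg {W : Set (V → ℝ)} (hW : Bornology.IsBounded W)
    (hneg : -W = W) (hne : W.Nonempty) {e : V → ℝ} (he : e ∈ vectorSpan ℝ W) {p q r : ℝ[X]}
    (hp : IsHStar (convexHull ℝ (insert (-e) W)) p)
    (hq : IsHStar (convexHull ℝ (insert e (insert (-e) W))) q)
    (hr : IsHStar (convexHull ℝ W) r) :
    q + r = C 2 * p := by
  set L := convexHull ℝ (insert (-e) W)
  have h0 : (0 : V → ℝ) ∈ convexHull ℝ W := zero_mem_convexHull_of_neg_eq hneg hne
  have hnegL : -L = convexHull ℝ (insert e W) := by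
    rw [← convexHull_neg, Set.neg_insert, neg_neg, hneg]
  have hunion : convexHull ℝ (insert e (insert (-e) W)) = L ∪ -L := by
    rw [hnegL]
    exact convexHull_insert_insert_neg h0 e
  have hinter : convexHull ℝ W = L ∩ -L := by
    rw [hnegL]
    exact (convexHull_insert_neg_inter_convexHull_insert h0 e).symm
  have haff : ∀ v ∈ vectorSpan ℝ W, v ∈ affineSpan ℝ W := fun v =>
    mem_affineSpan_of_mem_vectorSpan (convexHull_subset_affineSpan W h0)
  have hdimL : polyDim L = polyDim (convexHull ℝ W) := by
    rw [polyDim_convexHull, polyDim_convexHull, polyDim, polyDim,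
      vectorSpan_insert_eq_vectorSpan (haff _ (neg_mem he))]
  have hdimU : polyDim (convexHull ℝ (insert e (insert (-e) W))) = polyDim (convexHull ℝ W) := by
    rw [polyDim_convexHull, polyDim_convexHull, polyDim, polyDim,
      vectorSpan_insert_eq_vectorSpan (affineSpan_mono ℝ (Set.subset_insert _ _) (haff e he)),
      vectorSpan_insert_eq_vectorSpan (haff _ (neg_mem he))]
  have hL : Bornology.IsBounded L := isBounded_convexHull.2 (hW.insert _)
  refine hq.add_eq_two_mul hr hp (hdimU.trans hdimL.symm) hdimL.symm fun m hm => ?_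
  rw [hunion, hinter, latticeCount_union_add_latticeCount_inter hL hL.neg hm, latticeCount_neg]
  ring

end Ehrhart

section EdgeVectors

variable {V : Type*} [DecidableEq V]

def edgeVectors (H : SimpleGraph V) : Set (V → ℝ) :=
  {v | ∃ i j, H.Adj i j ∧ v = unitVec i - unitVec j}

theorem neg_edgeVectors (H : SimpleGraph V) : -edgeVectors H = edgeVectors H := by
  have hneg : ∀ v ∈ edgeVectors H, -v ∈ edgeVectors H := by
    rintro _ ⟨i, j, h, rfl⟩
    exact ⟨j, i, h.symm, neg_sub _ _⟩
  ext v
  exact ⟨fun hv => neg_neg v ▸ hneg _ hv, hneg v⟩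

theorem isBounded_edgeVectors [Finite V] (H : SimpleGraph V) :
    Bornology.IsBounded (edgeVectors H) :=
  (Set.finite_range fun p : V × V => unitVec p.1 - unitVec p.2).isBounded.subset
    (by rintro _ ⟨i, j, -, rfl⟩; exact ⟨(i, j), rfl⟩)

theorem unitVec_sub_mem_edgeVectors_iff {H : SimpleGraph V} {i j : V} (hij : i ≠ j) :
    unitVec i - unitVec j ∈ edgeVectors H ↔ H.Adj i j := by
  refine ⟨fun ⟨k, l, hkl, heq⟩ => ?_, fun h => ⟨i, j, h, rfl⟩⟩
  have hi := congrFun heq i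
  have hj := congrFun heq j
  simp only [unitVec, Pi.sub_apply, hij, hij.symm, if_true, if_false] at hi hj
  obtain rfl : i = k := by
    by_contra h
    rw [if_neg h] at hi
    split_ifs at hi <;> norm_num at hi
  obtain rfl : j = l := by
    by_contra h
    rw [if_neg hij.symm, if_neg h] at hj
    norm_num at hj
  exact hkl

theorem edgeVectors_diff_singleton {G : SimpleGraph V} {i j : V} (hij : G.Adj i j) :
    edgeVectors G \ {unitVec i - unitVec j} =
      insert (-(unitVec i - unitVec j)) (edgeVectors (G.deleteEdges {s(i, j)})) := by
  set e := unitVec i - unitVec j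
  have hne : -e ≠ e := by
    intro h
    have hi := congrFun h i
    simp only [e, unitVec, Pi.neg_apply, Pi.sub_apply, if_pos, if_neg hij.ne] at hi
    norm_num at hi
  have heW : e ∉ edgeVectors (G.deleteEdges {s(i, j)}) := by
    simp [e, unitVec_sub_mem_edgeVectors_iff hij.ne]
  ext v
  simp only [Set.mem_sdiff, Set.mem_singleton_iff, Set.mem_insert_iff]
  constructor
  · rintro ⟨⟨k, l, hkl, rfl⟩, hv⟩
    by_cases hkl' : s(k, l) = s(i, j)
    · rcases Sym2.eq_iff.mp hkl' with ⟨rfl, rfl⟩ | ⟨rfl, rfl⟩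
      · exact absurd rfl hv
      · exact Or.inl (neg_sub _ _).symm
    · exact Or.inr ⟨k, l, SimpleGraph.deleteEdges_adj.mpr ⟨hkl, hkl'⟩, rfl⟩
  · rintro (rfl | hv)
    · exact ⟨⟨j, i, hij.symm, neg_sub _ _⟩, hne⟩
    · obtain ⟨k, l, hkl, rfl⟩ := id hv
      exact ⟨⟨k, l, (SimpleGraph.deleteEdges_adj.mp hkl).1, rfl⟩, fun h => heW (h ▸ hv)⟩

theorem unitVec_sub_mem_vectorSpan_of_reachable {H : SimpleGraph V} {a b : V}
    (h : H.Reachable a b) : unitVec a - unitVec b ∈ vectorSpan ℝ (edgeVectors H) := by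
  obtain ⟨p⟩ := h
  induction p with
  | nil => simp
  | cons hadj _ ih =>
    have hedge := mem_vectorSpan_of_neg_mem (s := edgeVectors H) ⟨_, _, hadj, rfl⟩
      ⟨_, _, hadj.symm, neg_sub _ _⟩
    simpa using add_mem hedge ih

end EdgeVectors

end ABP

theorem hstar_delete_one_orientation_general {d : ℕ} (G : SimpleGraph (Fin d))
    (i j : Fin d) (hij : G.Adj i j)
    (hbridge : ¬ G.IsBridge s(i, j))
    (hPe : Polynomial ℝ)
    (hhPe : IsHStar (convexHull ℝ
      ({v | ∃ k l, G.Adj k l ∧ v = unitVec k - unitVec l} \ {unitVec i - unitVec j})) hPe)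
    (hG : Polynomial ℝ) (hhG : IsHStar (symEdgeA G) hG)
    (hGe : Polynomial ℝ) (hhGe : IsHStar (symEdgeA (G.deleteEdges {s(i, j)})) hGe) :
    hPe = Polynomial.C ((1 : ℝ) / 2) * (hG + hGe) := by
  obtain ⟨p⟩ : (G.deleteEdges {s(i, j)}).Reachable i j := not_not.mp hbridge
  have hne : (edgeVectors (G.deleteEdges {s(i, j)})).Nonempty :=
    ⟨_, i, p.snd, p.adj_snd (p.not_nil_of_ne hij.ne), rfl⟩
  have he : unitVec i - unitVec j ∈ edgeVectors G := ⟨i, j, hij, rfl⟩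
  change IsHStar (convexHull ℝ (edgeVectors G \ {unitVec i - unitVec j})) hPe at hhPe
  change IsHStar (convexHull ℝ (edgeVectors G)) hG at hhG
  rw [edgeVectors_diff_singleton hij] at hhPe
  rw [← Set.insert_sdiff_self_of_mem he, edgeVectors_diff_singleton hij] at hhG
  have htwice := hstar_convexHull_insert_neg (isBounded_edgeVectors _) (neg_edgeVectors _) hne
    (unitVec_sub_mem_vectorSpan_of_reachable ⟨p⟩) hhPe hhG hhGe
  rw [htwice, ← mul_assoc, ← C_mul]
  norm_num

/-- Lemma: deleting one of the two orientations of a non-bridge edge.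
If `e = {i,j}` is not a bridge of the connected graph `G`, and `P_e` is the convex hull
of `A(G) ∖ {e_i - e_j}`, then `h*(P_e, x) = (1/2)(h*(A_G, x) + h*(A_{G∖e}, x))`. -/
theorem hstar_delete_one_orientation {d : ℕ} (G : SimpleGraph (Fin d))
    (hconn : G.Connected) (i j : Fin d) (hij : G.Adj i j)
    (hbridge : ¬ G.IsBridge s(i, j))
    (hPe : Polynomial ℝ)
    (hhPe : IsHStar (convexHull ℝ
      ({v | ∃ k l, G.Adj k l ∧ v = unitVec k - unitVec l} \ {unitVec i - unitVec j})) hPe)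
    (hG : Polynomial ℝ) (hhG : IsHStar (symEdgeA G) hG)
    (hGe : Polynomial ℝ) (hhGe : IsHStar (symEdgeA (G.deleteEdges {s(i, j)})) hGe) :
    hPe = Polynomial.C ((1 : ℝ) / 2) * (hG + hGe) :=
  hstar_delete_one_orientation_general G i j hij hbridge hPe hhPe hG hhG hGe hhGe
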